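/- arXiv:0910.2120 — 3 statements merged into one kernel-verified Lean document; each statement's English description precedes it below -/
import Mathlib

section
/- Let X be an n×n Hermitian matrix, θ real, u a unit vector, and z an eigenvalue of X̃ = X + θuu* that is not an eigenvalue of X, with unit-norm eigenvector ũ. Writing μ = ∑_k |u_k|² δ_{λ_k} for the weighted spectral measure of X in the eigenbasis coordinates of u, one has |⟨u, ũ⟩|² = 1 / (θ² ∫ dμ(t)/(z − t)²). -/
open Matrix

/-- With `X = diag(λ)`, `u` a unit vector, and `z` an eigenvalue of
`X̃ = X + θuu*` that is not an eigenvalue of `X`, any unit eigenvector `ũ` satisfies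
`|⟨u, ũ⟩|² = 1 / (θ² ∑_k |u_k|²/(z − λ_k)²)`. -/
theorem stmt_5 (n : ℕ) (lam : Fin n → ℝ) (θ : ℝ)
    (u : Fin n → ℂ) (hu : ∑ k, ‖u k‖ ^ 2 = 1)
    (z : ℂ) (hz : ∀ k, z ≠ (lam k : ℂ))
    (ut : Fin n → ℂ) (hut : ∑ k, ‖ut k‖ ^ 2 = 1)
    (heig : (Matrix.diagonal (fun k => (lam k : ℂ)) + (θ : ℂ) • Matrix.vecMulVec u (star u))
        *ᵥ ut = z • ut) :
    (Complex.normSq (star u ⬝ᵥ ut) : ℂ)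
      = 1 / ((θ : ℂ) ^ 2 * ∑ k, (‖u k‖ ^ 2 : ℂ) / (z - (lam k : ℂ)) ^ 2) := by
  set c : ℂ := star u ⬝ᵥ ut with hc
  have hzk : ∀ k, z - (lam k : ℂ) ≠ 0 := fun k => sub_ne_zero.mpr (hz k)
  -- componentwise eigen equation
  have hk : ∀ k, (z - (lam k : ℂ)) * ut k = (θ : ℂ) * u k * c := by
    intro k
    have h0 := congrFun heig k
    rw [add_mulVec] at h0
    simp only [Pi.add_apply, mulVec_diagonal, smul_mulVec, Pi.smul_apply,
      smul_eq_mul] at h0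
    have h1 : (Matrix.vecMulVec u (star u) *ᵥ ut) k = u k * c := by
      rw [hc]
      simp [mulVec, vecMulVec_apply, dotProduct, Finset.mul_sum, mul_assoc]
    rw [h1] at h0
    linear_combination -h0
  have hutk : ∀ k, ut k = (θ : ℂ) * u k * c / (z - (lam k : ℂ)) := by
    intro k
    rw [eq_div_iff (hzk k)]
    linear_combination hk k
  -- norms as complex products with conjugates
  have hnut : ∀ k, ((‖ut k‖ : ℂ)) ^ 2 = ut k * (starRingEnd ℂ) (ut k) := by
    intro k
    rw [Complex.mul_conj]
    norm_cast
    simp [Complex.sq_norm, ← Complex.normSq_eq_norm_sq]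
  have hnu : ∀ k, ((‖u k‖ : ℂ)) ^ 2 = u k * (starRingEnd ℂ) (u k) := by
    intro k
    rw [Complex.mul_conj]
    norm_cast
    simp [Complex.sq_norm, ← Complex.normSq_eq_norm_sq]
  have hutC : (∑ k, ((‖ut k‖ : ℂ)) ^ 2) = 1 := by
    norm_cast
  -- z is real
  have hzreal : (starRingEnd ℂ) z = z := by
    have hE : z - (∑ k, (lam k : ℂ) * (‖ut k‖ : ℂ) ^ 2) = (θ : ℂ) * (Complex.normSq c : ℂ) := by
      have h1 : ∑ k, (starRingEnd ℂ) (ut k) * ((z - (lam k : ℂ)) * ut k)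
          = ∑ k, (starRingEnd ℂ) (ut k) * ((θ : ℂ) * u k * c) :=
        Finset.sum_congr rfl fun k _ => by rw [hk k]
      have hL : ∑ k, (starRingEnd ℂ) (ut k) * ((z - (lam k : ℂ)) * ut k)
          = z * (∑ k, ((‖ut k‖ : ℂ)) ^ 2) - ∑ k, (lam k : ℂ) * (‖ut k‖ : ℂ) ^ 2 := by
        rw [Finset.mul_sum, ← Finset.sum_sub_distrib]
        exact Finset.sum_congr rfl fun k _ => by rw [hnut k]; ring
      have hR : ∑ k, (starRingEnd ℂ) (ut k) * ((θ : ℂ) * u k * c)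
          = (θ : ℂ) * (Complex.normSq c : ℂ) := by
        have h2 : ∑ k, (starRingEnd ℂ) (ut k) * ((θ : ℂ) * u k * c)
            = (θ : ℂ) * c * ∑ k, u k * (starRingEnd ℂ) (ut k) := by
          rw [Finset.mul_sum]; exact Finset.sum_congr rfl fun k _ => by ring
        rw [h2]
        have hconj : ∑ k, u k * (starRingEnd ℂ) (ut k) = (starRingEnd ℂ) c := by
          rw [hc]
          simp [dotProduct, map_sum, mul_comm]
        rw [hconj, mul_assoc, Complex.mul_conj]
      rw [hL, hutC, mul_one] at h1
      rw [h1, hR]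
    have hE' := congrArg (starRingEnd ℂ) hE
    simp only [map_sub, map_sum, _root_.map_mul, Complex.conj_ofReal, map_pow] at hE'
    linear_combination hE' - hE
  -- key identity: |ut k|² = θ² |c|² |u k|² / (z - λ_k)²
  have hterm : ∀ k, ((‖ut k‖ : ℂ)) ^ 2
      = (Complex.normSq c : ℂ) * ((θ : ℂ) ^ 2 * (((‖u k‖ : ℂ)) ^ 2 / (z - (lam k : ℂ)) ^ 2)) := by
    intro k
    rw [hnut k, hutk k]
    have hco : (starRingEnd ℂ) ((θ : ℂ) * u k * c / (z - (lam k : ℂ)))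
        = (θ : ℂ) * (starRingEnd ℂ) (u k) * (starRingEnd ℂ) c / (z - (lam k : ℂ)) := by
      rw [map_div₀, _root_.map_mul, _root_.map_mul, map_sub, Complex.conj_ofReal,
        Complex.conj_ofReal, hzreal]
    rw [hco, hnu k]
    have hcc : c * (starRingEnd ℂ) c = (Complex.normSq c : ℂ) := Complex.mul_conj c
    rw [div_mul_div_comm, ← sq]
    have h2 : (Complex.normSq c : ℂ)
        * ((θ : ℂ) ^ 2 * ((u k * (starRingEnd ℂ) (u k)) / (z - (lam k : ℂ)) ^ 2))
        = ((c * (starRingEnd ℂ) c) * ((θ : ℂ) ^ 2 * (u k * (starRingEnd ℂ) (u k))))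
          / (z - (lam k : ℂ)) ^ 2 := by
      rw [hcc]; ring
    rw [h2]
    congr 1
    ring
  have hmain : (Complex.normSq c : ℂ)
      * ((θ : ℂ) ^ 2 * ∑ k, ((‖u k‖ : ℂ)) ^ 2 / (z - (lam k : ℂ)) ^ 2) = 1 := by
    rw [← hutC, Finset.mul_sum, Finset.mul_sum]
    exact (Finset.sum_congr rfl fun k _ => (hterm k).symm)
  have hne : ((θ : ℂ) ^ 2 * ∑ k, ((‖u k‖ : ℂ)) ^ 2 / (z - (lam k : ℂ)) ^ 2) ≠ 0 := by
    intro h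
    rw [h, mul_zero] at hmain
    exact one_ne_zero hmain.symm
  rw [eq_div_iff hne]
  exact hmain
end

section
/- Let A and B be n×n Hermitian matrices. Then ∑_{j=1}^n (λ_j(A) − λ_j(B))² ≤ Tr((A − B)²), where λ_j denotes the j-th largest eigenvalue. -/
/-!
Diagonalise `A = U diag(a) Uᴴ` and `B = V diag(b) Vᴴ` with both spectra listed in decreasing
order. The moduli squared `|W i j|²` of the entries of the unitary `W = Uᴴ V` form a doubly
stochastic matrix `S`, and `Tr((A - B)²) = ∑ aᵢ² + ∑ bᵢ² - 2 ∑ Sᵢⱼ aᵢ bⱼ`. By Birkhoff's theorem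
`S` is a convex combination of permutation matrices, and for each permutation `σ` the
rearrangement inequality gives `∑ aᵢ b_σ(i) ≤ ∑ aᵢ bᵢ`, since `a` and `b` are similarly ordered.
-/

open Matrix

section

variable {𝕜 n : Type*} [RCLike 𝕜] [Fintype n] [DecidableEq n]

theorem Monovary.dotProduct_mulVec_le_of_mem_doublyStochastic {R : Type*} [Field R]
    [LinearOrder R] [IsStrictOrderedRing R] {S : Matrix n n R} (hS : S ∈ doublyStochastic R n)
    {a b : n → R} (hab : Monovary a b) : a ⬝ᵥ (S *ᵥ b) ≤ a ⬝ᵥ b := by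
  obtain ⟨w, hw_nonneg, hw_sum, rfl⟩ := exists_eq_sum_perm_of_mem_doublyStochastic hS
  calc a ⬝ᵥ ((∑ σ, w σ • σ.permMatrix R) *ᵥ b) = ∑ σ, w σ * (a ⬝ᵥ (b ∘ σ)) := by
        simp only [Matrix.sum_mulVec, smul_mulVec, permMatrix_mulVec, dotProduct_sum,
          dotProduct_smul, smul_eq_mul]
    _ ≤ ∑ σ, w σ * (a ⬝ᵥ b) := by
        gcongr with σ
        · exact hw_nonneg σ
        · exact hab.sum_mul_comp_perm_le_sum_mul
    _ = a ⬝ᵥ b := by rw [← Finset.sum_mul, hw_sum, one_mul]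

theorem Matrix.of_norm_sq_mem_doublyStochastic {W : Matrix n n 𝕜} (hW : W ∈ unitaryGroup n 𝕜) :
    of (fun i j => ‖W i j‖ ^ 2) ∈ doublyStochastic ℝ n := by
  rw [mem_doublyStochastic_iff_sum]
  refine ⟨fun i j => sq_nonneg _, fun i => ?_, fun j => ?_⟩
  · have := congr_fun₂ (mem_unitaryGroup_iff.mp hW) i i
    simp [mul_apply, RCLike.mul_conj] at this
    exact_mod_cast this
  · have := congr_fun₂ (mem_unitaryGroup_iff'.mp hW) j j
    simp [mul_apply, RCLike.conj_mul] at this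
    exact_mod_cast this

theorem Matrix.permMatrix_mem_unitaryGroup (σ : Equiv.Perm n) :
    σ.permMatrix 𝕜 ∈ unitaryGroup n 𝕜 := by
  rw [mem_unitaryGroup_iff, star_eq_conjTranspose, conjTranspose_permMatrix,
    PEquiv.toMatrix_toPEquiv_mul]
  ext i j
  simp [PEquiv.toMatrix_apply, one_apply]

theorem Matrix.permMatrix_mul_diagonal_mul_conjTranspose (σ : Equiv.Perm n) (d : n → 𝕜) :
    σ.permMatrix 𝕜 * diagonal d * (σ.permMatrix 𝕜)ᴴ = diagonal (d ∘ σ) := by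
  rw [conjTranspose_permMatrix, PEquiv.toMatrix_toPEquiv_mul, PEquiv.mul_toMatrix_toPEquiv,
    Equiv.Perm.inv_def, Equiv.symm_symm, submatrix_submatrix, Function.comp_id,
    Function.id_comp, submatrix_diagonal_equiv]

theorem Matrix.IsHermitian.exists_unitary_eq_conj_diagonal_comp {A : Matrix n n 𝕜}
    (hA : A.IsHermitian) (σ : Equiv.Perm n) :
    ∃ U ∈ unitaryGroup n 𝕜, A = U * diagonal (RCLike.ofReal ∘ (hA.eigenvalues ∘ σ)) * Uᴴ := by
  refine ⟨hA.eigenvectorUnitary * σ⁻¹.permMatrix 𝕜,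
    mul_mem (SetLike.coe_mem _) (permMatrix_mem_unitaryGroup _), ?_⟩
  conv_lhs => rw [hA.spectral_theorem]
  rw [Unitary.conjStarAlgAut_apply, conjTranspose_mul, ← mul_assoc,
    mul_assoc _ (σ⁻¹.permMatrix 𝕜), mul_assoc _ _ (σ⁻¹.permMatrix 𝕜)ᴴ,
    permMatrix_mul_diagonal_mul_conjTranspose]
  simp [Function.comp_assoc, star_eq_conjTranspose]

theorem Matrix.re_trace_diagonal_mul_mul_diagonal_mul_conjTranspose (a b : n → ℝ)
    (W : Matrix n n 𝕜) :
    RCLike.re (diagonal (RCLike.ofReal ∘ a) * W * diagonal (RCLike.ofReal ∘ b) * Wᴴ).trace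
      = a ⬝ᵥ (of (fun i j => ‖W i j‖ ^ 2) *ᵥ b) := by
  simp_rw [trace, diag_apply, mul_apply (N := Wᴴ), mul_diagonal, diagonal_mul,
    conjTranspose_apply, map_sum, dotProduct, mulVec, dotProduct, Finset.mul_sum]
  refine Finset.sum_congr rfl fun i _ => Finset.sum_congr rfl fun j _ => ?_
  calc RCLike.re ((a i : 𝕜) * W i j * b j * star (W i j))
      = RCLike.re (((a i * b j : ℝ) : 𝕜) * (W i j * star (W i j))) := by push_cast; ring_nf
    _ = a i * (‖W i j‖ ^ 2 * b j) := by
      rw [RCLike.star_def, RCLike.mul_conj, ← RCLike.ofReal_pow, ← RCLike.ofReal_mul,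
        RCLike.ofReal_re]
      ring

theorem Matrix.re_trace_mul_of_eq_conj_diagonal {A B U V : Matrix n n 𝕜} {a b : n → ℝ}
    (hA : A = U * diagonal (RCLike.ofReal ∘ a) * Uᴴ)
    (hB : B = V * diagonal (RCLike.ofReal ∘ b) * Vᴴ) :
    RCLike.re (A * B).trace = a ⬝ᵥ (of (fun i j => ‖(Uᴴ * V) i j‖ ^ 2) *ᵥ b) := by
  rw [← re_trace_diagonal_mul_mul_diagonal_mul_conjTranspose, hA, hB, conjTranspose_mul,
    conjTranspose_conjTranspose]
  simp only [Matrix.mul_assoc]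
  rw [trace_mul_comm U]
  simp only [Matrix.mul_assoc]

theorem Matrix.re_trace_mul_self_of_eq_conj_diagonal {A U : Matrix n n 𝕜} {a : n → ℝ}
    (hU : U ∈ unitaryGroup n 𝕜) (hA : A = U * diagonal (RCLike.ofReal ∘ a) * Uᴴ) :
    RCLike.re (A * A).trace = a ⬝ᵥ a := by
  have hUU : Uᴴ * U = 1 := mem_unitaryGroup_iff'.mp hU
  have h_norm_sq_one : of (fun i j => ‖(1 : Matrix n n 𝕜) i j‖ ^ 2) = (1 : Matrix n n ℝ) := by
    ext i j
    by_cases h : i = j <;> simp [one_apply, h]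
  rw [re_trace_mul_of_eq_conj_diagonal hA hA, hUU, h_norm_sq_one, one_mulVec]

theorem Matrix.sum_sq_sub_le_re_trace_mul_self_sub {A B U V : Matrix n n 𝕜} {a b : n → ℝ}
    (hU : U ∈ unitaryGroup n 𝕜) (hV : V ∈ unitaryGroup n 𝕜)
    (hA : A = U * diagonal (RCLike.ofReal ∘ a) * Uᴴ)
    (hB : B = V * diagonal (RCLike.ofReal ∘ b) * Vᴴ) (hab : Monovary a b) :
    ∑ i, (a i - b i) ^ 2 ≤ RCLike.re ((A - B) * (A - B)).trace := by
  have hW : Uᴴ * V ∈ unitaryGroup n 𝕜 := mul_mem (Unitary.star_mem hU) hV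
  have hcross := hab.dotProduct_mulVec_le_of_mem_doublyStochastic
    (of_norm_sq_mem_doublyStochastic hW)
  have hexpand : RCLike.re ((A - B) * (A - B)).trace
      = RCLike.re (A * A).trace + RCLike.re (B * B).trace - 2 * RCLike.re (A * B).trace := by
    rw [show (A - B) * (A - B) = A * A + B * B - A * B - B * A by noncomm_ring, trace_sub,
      trace_sub, trace_add, trace_mul_comm B A]
    simp only [map_add, map_sub]
    ring
  have hsq : ∑ i, (a i - b i) ^ 2 = a ⬝ᵥ a + b ⬝ᵥ b - 2 * (a ⬝ᵥ b) := by
    simp only [dotProduct, Finset.mul_sum, ← Finset.sum_add_distrib, ← Finset.sum_sub_distrib]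
    exact Finset.sum_congr rfl fun i _ => by ring
  rw [hexpand, re_trace_mul_self_of_eq_conj_diagonal hU hA,
    re_trace_mul_self_of_eq_conj_diagonal hV hB, re_trace_mul_of_eq_conj_diagonal hA hB, hsq]
  linarith

end

/-- Hoffman–Wielandt type inequality for Hermitian matrices:
`∑_j (λ_j(A) − λ_j(B))² ≤ Tr((A − B)²)`, with eigenvalues in decreasing order. -/
theorem stmt_13 (n : ℕ) (A B : Matrix (Fin n) (Fin n) ℂ)
    (hA : A.IsHermitian) (hB : B.IsHermitian)
    (eA eB : Fin n → ℝ) (hmA : Antitone eA) (hmB : Antitone eB)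
    (hpA : ∃ σ : Equiv.Perm (Fin n), eA = hA.eigenvalues ∘ σ)
    (hpB : ∃ σ : Equiv.Perm (Fin n), eB = hB.eigenvalues ∘ σ) :
    ∑ j, (eA j - eB j) ^ 2 ≤ (((A - B) * (A - B)).trace).re := by
  obtain ⟨σ, rfl⟩ := hpA
  obtain ⟨τ, rfl⟩ := hpB
  obtain ⟨U, hU, hAU⟩ := hA.exists_unitary_eq_conj_diagonal_comp σ
  obtain ⟨V, hV, hBV⟩ := hB.exists_unitary_eq_conj_diagonal_comp τ
  exact sum_sq_sub_le_re_trace_mul_self_sub hU hV hAU hBV (hmA.monovary hmB)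
end

section
/- Fix r ≥ 1, pairwise distinct nonzero reals θ₁,…,θ_r, reals a < b, and an analytic function G on ℂ\[a,b] with: G(z) ∈ ℝ iff z ∈ ℝ; G'(z) < 0 for all real z ∉ [a,b]; and G(z) → 0 as |z| → ∞. Let M_G(z) = diag(1−θ₁G(z),…,1−θ_rG(z)). Then the set of z ∈ ℂ\[a,b] at which M_G(z) is singular is a finite set of real points z₁ > ⋯ > z_p, where p equals the number of indices i with G(a⁻) < 1/θ_i < G(b⁺), and at each z_i the matrix M_G(z_i) has rank exactly r−1. -/
open Set Filter Topology Matrix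

/-!
Off `[a, b]` the function `G` is real on the real axis, and `x ↦ G x` is strictly decreasing on
`(-∞, a)` and on `(b, ∞)` with limit `0` at `∓∞`. By the intermediate value theorem it maps these
half-lines bijectively onto `(G(a⁻), 0)` and `(0, G(b⁺))`. The matrix `M_G(z)` is singular iff
`G z = 1/θₖ` for some `k`, which forces `z` to be real; so the singular points correspond
bijectively to the indices with `G(a⁻) < 1/θₖ < G(b⁺)`, and at such a point only the `k`-th
diagonal entry vanishes because the `θⱼ` are distinct.
-/

section Monotone

variable {α β : Type*} [LinearOrder α] [LinearOrder β] [TopologicalSpace β]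
  [OrderClosedTopology β] {s : Set α} {f : α → β} {l : Filter α} [l.NeBot] {v : β} {x y : α}

theorem StrictAntiOn.lt_apply_of_tendsto (hf : StrictAntiOn f s) (hv : Tendsto f l (𝓝 v))
    (hx : x ∈ s) (hy : y ∈ s) (hxy : x < y) (hl : ∀ᶠ w in l, w ∈ s ∧ y < w) : v < f x :=
  (le_of_tendsto hv (hl.mono fun _ hw => (hf hy hw.1 hw.2).le) : v ≤ f y).trans_lt
    (hf hx hy hxy)

theorem StrictAntiOn.apply_lt_of_tendsto (hf : StrictAntiOn f s) (hv : Tendsto f l (𝓝 v))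
    (hx : x ∈ s) (hy : y ∈ s) (hyx : y < x) (hl : ∀ᶠ w in l, w ∈ s ∧ w < y) : f x < v :=
  (hf hy hx hyx).trans_le
    (ge_of_tendsto hv (hl.mono fun _ hw => (hf hw.1 hy hw.2).le) : f y ≤ v)

end Monotone

section IntermediateValue

variable {α β : Type*} [ConditionallyCompleteLinearOrder α] [TopologicalSpace α]
  [OrderTopology α] [DenselyOrdered α] [LinearOrder β] [TopologicalSpace β] [OrderClosedTopology β]
  {f : α → β} {a : α} {u v : β}

theorem StrictAntiOn.image_Iio_eq_Ioo [NoMinOrder α] (hf : StrictAntiOn f (Iio a))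
    (hc : ContinuousOn f (Iio a)) (ha : Tendsto f (𝓝[<] a) (𝓝 u))
    (hbot : Tendsto f atBot (𝓝 v)) : f '' Iio a = Ioo u v := by
  refine Subset.antisymm ?_ (isPreconnected_Iio.intermediate_value_Ioo
    (le_principal_iff.2 self_mem_nhdsWithin) (le_principal_iff.2 (Iio_mem_atBot a)) hc ha hbot)
  rintro _ ⟨x, hx : x < a, rfl⟩
  refine ⟨?_, ?_⟩
  · obtain ⟨y, hxy, hya⟩ := exists_between hx
    exact hf.lt_apply_of_tendsto ha hx hya hxy
      (mem_of_superset (Ioo_mem_nhdsLT hya) fun _ hw => ⟨hw.2, hw.1⟩)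
  · obtain ⟨y, hyx⟩ := exists_lt x
    exact hf.apply_lt_of_tendsto hbot hx (hyx.trans hx) hyx
      ((eventually_lt_atBot y).mono fun w hw => ⟨hw.trans (hyx.trans hx), hw⟩)

theorem StrictAntiOn.image_Ioi_eq_Ioo [NoMaxOrder α] (hf : StrictAntiOn f (Ioi a))
    (hc : ContinuousOn f (Ioi a)) (htop : Tendsto f atTop (𝓝 u))
    (ha : Tendsto f (𝓝[>] a) (𝓝 v)) : f '' Ioi a = Ioo u v := by
  refine Subset.antisymm ?_ (isPreconnected_Ioi.intermediate_value_Ioo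
    (le_principal_iff.2 (Ioi_mem_atTop a)) (le_principal_iff.2 self_mem_nhdsWithin) hc htop ha)
  rintro _ ⟨x, hx : a < x, rfl⟩
  refine ⟨?_, ?_⟩
  · obtain ⟨y, hxy⟩ := exists_gt x
    exact hf.lt_apply_of_tendsto htop hx (hx.trans hxy) hxy
      ((eventually_gt_atTop y).mono fun w hw => ⟨hx.trans (hxy.trans hw), hw⟩)
  · obtain ⟨y, hay, hyx⟩ := exists_between hx
    exact hf.apply_lt_of_tendsto ha hx hay hyx (Ioo_mem_nhdsGT hay)

end IntermediateValue

section Complement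

variable {α β : Type*} [LinearOrder α] [LinearOrder β] {f : α → β} {a b : α} {u m v : β}

theorem compl_Icc_eq_Iio_union_Ioi : (Icc a b)ᶜ = Iio a ∪ Ioi b := by
  ext x
  simp only [mem_compl_iff, mem_Icc, not_and_or, not_le, mem_union, mem_Iio, mem_Ioi]

theorem injOn_compl_Icc_of_image_eq_Ioo (h₁ : InjOn f (Iio a)) (h₂ : InjOn f (Ioi b))
    (hi₁ : f '' Iio a = Ioo u m) (hi₂ : f '' Ioi b = Ioo m v) : InjOn f (Icc a b)ᶜ := by
  have hlt : ∀ x ∈ Iio a, f x < m := fun x hx => (hi₁ ▸ mem_image_of_mem f hx).2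
  have hgt : ∀ x ∈ Ioi b, m < f x := fun x hx => (hi₂ ▸ mem_image_of_mem f hx).1
  rw [compl_Icc_eq_Iio_union_Ioi]
  rintro x (hx | hx) y (hy | hy) hxy
  · exact h₁ hx hy hxy
  · exact absurd (hxy ▸ hlt x hx) (hgt y hy).not_gt
  · exact absurd (hxy ▸ hlt y hy) (hgt x hx).not_gt
  · exact h₂ hx hy hxy

theorem image_compl_Icc_eq_Ioo_diff [NoMinOrder α] [NoMaxOrder α] (hi₁ : f '' Iio a = Ioo u m)
    (hi₂ : f '' Ioi b = Ioo m v) : f '' (Icc a b)ᶜ = Ioo u v \ {m} := by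
  obtain ⟨_, hum⟩ : (Ioo u m).Nonempty := hi₁ ▸ nonempty_Iio.image f
  obtain ⟨_, hmv⟩ : (Ioo m v).Nonempty := hi₂ ▸ nonempty_Ioi.image f
  rw [compl_Icc_eq_Iio_union_Ioi, image_union, hi₁, hi₂]
  ext t
  rcases lt_trichotomy t m with htm | rfl | hmt
  · simp [htm, htm.trans (hmv.1.trans hmv.2), htm.ne, htm.not_gt]
  · simp
  · simp [hmt, (hum.1.trans hum.2).trans hmt, hmt.ne', hmt.not_gt]

end Complement

theorem Set.InjOn.ncard_inter_preimage_range {α β ι : Type*} {U : Set α} {F : α → β}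
    (hF : InjOn F U) {c : ι → β} (hc : Function.Injective c) :
    (U ∩ F ⁻¹' range c).ncard = Nat.card {i // c i ∈ F '' U} := by
  rw [← (hF.mono inter_subset_left).ncard_image, image_inter_preimage,
    ← image_preimage_eq_inter_range, ncard_image_of_injective _ hc, ← Nat.card_coe_set_eq]
  rfl

theorem Set.Finite.exists_strictAnti_fin_range {α : Type*} [LinearOrder α] {s : Set α}
    (hs : s.Finite) : ∃ zs : Fin s.ncard → α, StrictAnti zs ∧ range zs = s := by
  let e := hs.toFinset.orderEmbOfFin (ncard_eq_toFinset_card s hs).symm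
  refine ⟨e ∘ Fin.rev, e.strictMono.comp_strictAnti Fin.rev_strictAnti, ?_⟩
  rw [range_comp, Fin.rev_surjective.range_eq, image_univ, Finset.range_orderEmbOfFin,
    Finite.coe_toFinset]

section Diagonal

variable {n K : Type*} [Fintype n] [DecidableEq n] [Field K] {θ : n → K}

theorem one_sub_mul_eq_zero_iff_eq_inv {x w : K} (hx : x ≠ 0) : 1 - x * w = 0 ↔ w = x⁻¹ := by
  rw [sub_eq_zero, eq_comm, mul_comm, mul_eq_one_iff_eq_inv₀ hx]

theorem Matrix.det_diagonal_one_sub_mul_eq_zero_iff_eq_inv (hθ : ∀ i, θ i ≠ 0) {w : K} :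
    (diagonal fun i => 1 - θ i * w).det = 0 ↔ ∃ i, w = (θ i)⁻¹ := by
  simp only [det_diagonal, Finset.prod_eq_zero_iff, Finset.mem_univ, true_and,
    one_sub_mul_eq_zero_iff_eq_inv (hθ _)]

theorem Matrix.rank_diagonal_one_sub_mul_inv (hθ : Function.Injective θ) {k : n}
    (hk : θ k ≠ 0) : (diagonal fun j => 1 - θ j * (θ k)⁻¹).rank = Fintype.card n - 1 := by
  classical
  have hzero : ∀ j, 1 - θ j * (θ k)⁻¹ = 0 ↔ j = k := fun j => by
    rw [sub_eq_zero, eq_comm, mul_inv_eq_one₀ hk, hθ.eq_iff]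
  rw [rank_diagonal, Fintype.card_congr (Equiv.subtypeEquivRight fun j => (hzero j).not),
    Fintype.card_subtype_compl, Fintype.card_subtype_eq]

end Diagonal

section RealTrace

variable {G : ℂ → ℂ} {a b : ℝ}

theorem continuousOn_re_comp_ofReal {s : Set ℝ} (hd : ∀ x ∈ s, DifferentiableAt ℂ G x) :
    ContinuousOn (fun x : ℝ => (G x).re) s :=
  fun x hx => (hd x hx).hasDerivAt.real_of_complex.continuousAt.continuousWithinAt

theorem strictAntiOn_re_comp_ofReal {s : Set ℝ} (hs : Convex ℝ s)
    (hd : ∀ x ∈ s, DifferentiableAt ℂ G x) (hneg : ∀ x ∈ s, (deriv G x).re < 0) :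
    StrictAntiOn (fun x : ℝ => (G x).re) s :=
  strictAntiOn_of_deriv_neg hs (continuousOn_re_comp_ofReal hd) fun x hx => by
    rw [(hd x (interior_subset hx)).hasDerivAt.real_of_complex.deriv]
    exact hneg x (interior_subset hx)

theorem tendsto_re_comp_ofReal_cocompact {c : ℂ} (h : Tendsto G (cocompact ℂ) (𝓝 c)) :
    Tendsto (fun x : ℝ => (G x).re) (cocompact ℝ) (𝓝 c.re) :=
  (Complex.continuous_re.tendsto c).comp
    (h.comp Complex.isometry_ofReal.isClosedEmbedding.tendsto_cocompact)

theorem injOn_and_image_re_compl_Icc {Ga Gb : EReal}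
    (hd : ∀ x : ℝ, x ∉ Icc a b → DifferentiableAt ℂ G x)
    (hneg : ∀ x : ℝ, x ∉ Icc a b → (deriv G x).re < 0) (hG0 : Tendsto G (cocompact ℂ) (𝓝 0))
    (hGa : Tendsto (fun x : ℝ => ((G x).re : EReal)) (𝓝[<] a) (𝓝 Ga))
    (hGb : Tendsto (fun x : ℝ => ((G x).re : EReal)) (𝓝[>] b) (𝓝 Gb)) :
    InjOn (fun x : ℝ => ((G x).re : EReal)) (Icc a b)ᶜ ∧
      (fun x : ℝ => ((G x).re : EReal)) '' (Icc a b)ᶜ = Ioo Ga Gb \ {0} := by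
  have hanti {s : Set ℝ} (hs : Convex ℝ s) (hsub : s ⊆ (Icc a b)ᶜ) :
      StrictAntiOn (fun x : ℝ => ((G x).re : EReal)) s :=
    EReal.coe_strictMono.comp_strictAntiOn
      (strictAntiOn_re_comp_ofReal hs (fun x hx => hd x (hsub hx)) fun x hx => hneg x (hsub hx))
  have hcont : ContinuousOn (fun x : ℝ => ((G x).re : EReal)) (Icc a b)ᶜ :=
    continuous_coe_real_ereal.comp_continuousOn (continuousOn_re_comp_ofReal hd)
  have hlim : Tendsto (fun x : ℝ => ((G x).re : EReal)) (cocompact ℝ) (𝓝 0) := by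
    have := (continuous_coe_real_ereal.tendsto _).comp (tendsto_re_comp_ofReal_cocompact hG0)
    rwa [Complex.zero_re, EReal.coe_zero] at this
  have hIio : Iio a ⊆ (Icc a b)ᶜ := compl_Icc_eq_Iio_union_Ioi (b := b) ▸ subset_union_left
  have hIoi : Ioi b ⊆ (Icc a b)ᶜ := compl_Icc_eq_Iio_union_Ioi (a := a) ▸ subset_union_right
  have h₁ := (hanti (convex_Iio a) hIio).image_Iio_eq_Ioo (hcont.mono hIio) hGa
    (hlim.mono_left atBot_le_cocompact)
  have h₂ := (hanti (convex_Ioi b) hIoi).image_Ioi_eq_Ioo (hcont.mono hIoi)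
    (hlim.mono_left atTop_le_cocompact) hGb
  exact ⟨injOn_compl_Icc_of_image_eq_Ioo (hanti (convex_Iio a) hIio).injOn
    (hanti (convex_Ioi b) hIoi).injOn h₁ h₂, image_compl_Icc_eq_Ioo_diff h₁ h₂⟩

theorem ofReal_re_apply_eq_of_notMem_Icc
    (hGreal : ∀ z ∉ Complex.ofReal '' Icc a b, ((G z).im = 0 ↔ z.im = 0)) {x : ℝ}
    (hx : x ∉ Icc a b) : ((G x).re : ℂ) = G x :=
  Complex.ext rfl <| by
    simp [(hGreal x (Complex.ofReal_injective.mem_set_image.not.2 hx)).2 (Complex.ofReal_im x)]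

theorem setOf_det_diagonal_eq_zero_eq_image_ofReal {n : Type*} [Fintype n] [DecidableEq n]
    {θ : n → ℝ} (hθ : ∀ i, θ i ≠ 0)
    (hGreal : ∀ z ∉ Complex.ofReal '' Icc a b, ((G z).im = 0 ↔ z.im = 0)) :
    {z : ℂ | z ∉ Complex.ofReal '' Icc a b ∧ (diagonal fun i => 1 - (θ i : ℂ) * G z).det = 0} =
      Complex.ofReal '' {x : ℝ | x ∉ Icc a b ∧ ∃ k, (G x).re = (θ k)⁻¹} := by
  have hθ' : ∀ i, (θ i : ℂ) ≠ 0 := fun i => Complex.ofReal_ne_zero.2 (hθ i)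
  ext z
  simp only [det_diagonal_one_sub_mul_eq_zero_iff_eq_inv hθ', mem_image]
  constructor
  · rintro ⟨hz, k, hk⟩
    have hzim : z.im = 0 := (hGreal z hz).1 (by simp [hk, ← Complex.ofReal_inv])
    have hzre : (z.re : ℂ) = z := Complex.ext rfl (by simp [hzim])
    refine ⟨z.re, ⟨fun h => hz ⟨z.re, h, hzre⟩, k, ?_⟩, hzre⟩
    rw [hzre, hk, ← Complex.ofReal_inv, Complex.ofReal_re]
  · rintro ⟨x, ⟨hx, k, hk⟩, rfl⟩
    refine ⟨Complex.ofReal_injective.mem_set_image.not.2 hx, k, ?_⟩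
    rw [← ofReal_re_apply_eq_of_notMem_Icc hGreal hx, hk, Complex.ofReal_inv]

end RealTrace

theorem stmt_18_general (r : ℕ)
    (θ : Fin r → ℝ) (hθ0 : ∀ i, θ i ≠ 0) (hθd : Function.Injective θ)
    (a b : ℝ)
    (G : ℂ → ℂ)
    (hGan : AnalyticOnNhd ℂ G {z : ℂ | z ∉ (Complex.ofReal '' Set.Icc a b)})
    (hGreal : ∀ z ∉ (Complex.ofReal '' Set.Icc a b), ((G z).im = 0 ↔ z.im = 0))
    (hG' : ∀ x : ℝ, x ∉ Set.Icc a b →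
        (deriv G (x : ℂ)).im = 0 ∧ (deriv G (x : ℂ)).re < 0)
    (hG0 : Tendsto G (cocompact ℂ) (𝓝 0))
    (Ga Gb : EReal)
    (hGa : Tendsto (fun x : ℝ => ((G (x : ℂ)).re : EReal)) (𝓝[<] a) (𝓝 Ga))
    (hGb : Tendsto (fun x : ℝ => ((G (x : ℂ)).re : EReal)) (𝓝[>] b) (𝓝 Gb)) :
    ∃ (p : ℕ) (zs : Fin p → ℝ), StrictAnti zs ∧
      p = Nat.card {i : Fin r // Ga < (((θ i)⁻¹ : ℝ) : EReal)
          ∧ (((θ i)⁻¹ : ℝ) : EReal) < Gb} ∧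
      {z : ℂ | z ∉ (Complex.ofReal '' Set.Icc a b) ∧
          (Matrix.diagonal (fun i => 1 - (θ i : ℂ) * G z)).det = 0}
        = Set.range (fun i : Fin p => ((zs i : ℂ))) ∧
      ∀ i : Fin p,
        (Matrix.diagonal (fun j => 1 - (θ j : ℂ) * G ((zs i : ℂ)))).rank = r - 1 := by
  set F : ℝ → EReal := fun x => ((G x).re : EReal)
  set c : Fin r → EReal := fun i => (((θ i)⁻¹ : ℝ) : EReal)
  have hc : Function.Injective c := fun i j h =>
    hθd (inv_injective (EReal.coe_injective h))
  obtain ⟨hinj, himage⟩ := injOn_and_image_re_compl_Icc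
    (fun x hx => (hGan x (Complex.ofReal_injective.mem_set_image.not.2 hx)).differentiableAt)
    (fun x hx => (hG' x hx).2) hG0 hGa hGb
  set Z := (Icc a b)ᶜ ∩ F ⁻¹' range c
  have hZ : Z = {x : ℝ | x ∉ Icc a b ∧ ∃ k, (G x).re = (θ k)⁻¹} := by
    ext x
    simp [Z, F, c, eq_comm]
  have hZfin : Z.Finite := ((finite_range c).subset (image_subset_iff.2 inter_subset_right))
    |>.of_finite_image (hinj.mono inter_subset_left)
  obtain ⟨zs, hzs, hrange⟩ := hZfin.exists_strictAnti_fin_range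
  refine ⟨Z.ncard, zs, hzs, ?_, ?_, fun i => ?_⟩
  · rw [hinj.ncard_inter_preimage_range hc, himage]
    exact Nat.card_congr (Equiv.subtypeEquivRight fun i => by simp [c, hθ0 i])
  · rw [setOf_det_diagonal_eq_zero_eq_image_ofReal hθ0 hGreal, range_comp', hrange, hZ]
  · obtain ⟨hx, k, hk⟩ : zs i ∈ {x : ℝ | x ∉ Icc a b ∧ ∃ k, (G x).re = (θ k)⁻¹} :=
      hZ ▸ hrange ▸ mem_range_self i
    rw [← ofReal_re_apply_eq_of_notMem_Icc hGreal hx, hk, Complex.ofReal_inv,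
      rank_diagonal_one_sub_mul_inv (θ := fun j => (θ j : ℂ))
        (Complex.ofReal_injective.comp hθd) (Complex.ofReal_ne_zero.2 (hθ0 k)), Fintype.card_fin]

/-- Continuity lemma setup: for pairwise distinct nonzero reals
`θ₁,…,θ_r` and an analytic `G` on `ℂ∖[a,b]` which is real exactly on the reals, has
negative derivative on `ℝ∖[a,b]`, and tends to `0` at infinity, the set of
`z ∈ ℂ∖[a,b]` where `M_G(z) = diag(1−θᵢG(z))` is singular is a finite decreasing
family of real points `z₁ > ⋯ > z_p`, with `p` the number of `i` such that
`G(a⁻) < 1/θᵢ < G(b⁺)`, and `M_G(zᵢ)` has rank exactly `r−1`. -/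
theorem stmt_18 (r : ℕ) (hr : 1 ≤ r)
    (θ : Fin r → ℝ) (hθ0 : ∀ i, θ i ≠ 0) (hθd : Function.Injective θ)
    (a b : ℝ) (hab : a < b)
    (G : ℂ → ℂ)
    (hGan : AnalyticOnNhd ℂ G {z : ℂ | z ∉ (Complex.ofReal '' Set.Icc a b)})
    (hGreal : ∀ z ∉ (Complex.ofReal '' Set.Icc a b), ((G z).im = 0 ↔ z.im = 0))
    (hG' : ∀ x : ℝ, x ∉ Set.Icc a b →
        (deriv G (x : ℂ)).im = 0 ∧ (deriv G (x : ℂ)).re < 0)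
    (hG0 : Tendsto G (cocompact ℂ) (𝓝 0))
    (Ga Gb : EReal)
    (hGa : Tendsto (fun x : ℝ => ((G (x : ℂ)).re : EReal)) (𝓝[<] a) (𝓝 Ga))
    (hGb : Tendsto (fun x : ℝ => ((G (x : ℂ)).re : EReal)) (𝓝[>] b) (𝓝 Gb)) :
    ∃ (p : ℕ) (zs : Fin p → ℝ), StrictAnti zs ∧
      p = Nat.card {i : Fin r // Ga < (((θ i)⁻¹ : ℝ) : EReal)
          ∧ (((θ i)⁻¹ : ℝ) : EReal) < Gb} ∧
      {z : ℂ | z ∉ (Complex.ofReal '' Set.Icc a b) ∧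
          (Matrix.diagonal (fun i => 1 - (θ i : ℂ) * G z)).det = 0}
        = Set.range (fun i : Fin p => ((zs i : ℂ))) ∧
      ∀ i : Fin p,
        (Matrix.diagonal (fun j => 1 - (θ j : ℂ) * G ((zs i : ℂ)))).rank = r - 1 :=
  stmt_18_general r θ hθ0 hθd a b G hGan hGreal hG' hG0 Ga Gb hGa hGb
end
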